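/- Let 3/2<p<3, a,b>0, q = p+2p^2/3, and 0 < c ≤ (b|Q|_p^{2p^2/3}/2)^{3/(2p^2-3p)}. Then I(u) ≥ 0 for all u ∈ S(c), hence i(c) = 0, and i(c) has no minimizer: there is no u ∈ S(c) with I(u) = 0. -/

import Mathlib

open MeasureTheory Real Set Filter

noncomputable section

abbrev E3 := EuclideanSpace ℝ (Fin 3)

def gradPow (p : ℝ) (u : E3 → ℝ) : ℝ := ∫ x : E3, ‖fderiv ℝ u x‖ ^ p
def lpPow (s : ℝ) (u : E3 → ℝ) : ℝ := ∫ x : E3, |u x| ^ s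
def Wmem (p : ℝ) (u : E3 → ℝ) : Prop :=
  Differentiable ℝ u ∧ MeasureTheory.Integrable (fun x : E3 => |u x| ^ p) ∧
    MeasureTheory.Integrable (fun x : E3 => ‖fderiv ℝ u x‖ ^ p)
def Ifun (a b p q : ℝ) (u : E3 → ℝ) : ℝ :=
  a / p * gradPow p u + b / (2 * p) * (gradPow p u) ^ 2 - 1 / q * lpPow q u
def Sset (p c : ℝ) : Set (E3 → ℝ) := {u | Wmem p u ∧ lpPow p u = c ^ p}
def ifun (a b p q c : ℝ) : ℝ := sInf (Ifun a b p q '' Sset p c)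

/-!
On the sphere `lpPow p u = c ^ p` the Gagliardo–Nirenberg inequality has exponent
`3 (q - p) / p = 2 p` on the gradient, so for `c` below the threshold the `L^q` term is dominated
by the Kirchhoff term `b / (2p) |∇u|_p^{2p}`, leaving `I(u) ≥ (a/p) |∇u|_p^p ≥ 0`.
The mass-preserving dilations `t^{3/p} u(t x)` scale `|∇u|_p^p` by `t^p`, so letting `t → 0`
gives `i(c) = 0`. A minimizer would have `∇u = 0` a.e.; differentiating along lines (Fubini for
Haar measure) shows `u` is constant, and no nonzero constant lies in `L^p(ℝ³)`, contradicting
`c > 0`.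
-/

theorem eq_of_hasDerivAt_of_ae_eq_zero {F : Type*} [NormedAddCommGroup F] [NormedSpace ℝ F]
    [CompleteSpace F] {f f' : ℝ → F} (hf : ∀ t, HasDerivAt f (f' t) t) (hf' : f' =ᵐ[volume] 0)
    (a b : ℝ) : f a = f b := by
  have hint : IntervalIntegrable f' volume a b :=
    ((integrable_zero ℝ F volume).congr hf'.symm).intervalIntegrable
  have := intervalIntegral.integral_eq_sub_of_hasDerivAt (fun t _ => hf t) hint
  rw [intervalIntegral.integral_congr_ae (hf'.mono fun t ht _ => ht), Pi.zero_def,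
    intervalIntegral.integral_zero] at this
  exact (sub_eq_zero.1 this.symm).symm

theorem Differentiable.apply_eq_of_ae_fderiv_eq_zero {E F : Type*} [NormedAddCommGroup E]
    [NormedSpace ℝ E] [FiniteDimensional ℝ E] [MeasurableSpace E] [BorelSpace E]
    {μ : Measure E} [μ.IsAddHaarMeasure] [NormedAddCommGroup F] [NormedSpace ℝ F]
    [CompleteSpace F] {u : E → F} (hu : Differentiable ℝ u) (h : ∀ᵐ x ∂μ, fderiv ℝ u x = 0)
    (x y : E) : u x = u y := by
  suffices ∀ v z : E, ∀ t : ℝ, u (z + t • v) = u z by simpa using this (x - y) y 1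
  intro v
  let L : ℝ →L[ℝ] E := ContinuousLinearMap.smulRight (1 : ℝ →L[ℝ] ℝ) v
  have hline : ∀ᵐ z ∂μ, ∀ᵐ t : ℝ, fderiv ℝ u (z + t • v) = 0 := by
    have := (ae_ae_add_linearMap_mem_iff L.toLinearMap volume μ
      (measurable_fderiv ℝ u (measurableSet_singleton 0))).2 h
    simpa [L] using this
  have hG : ∀ᵐ z ∂μ, ∀ t : ℝ, u (z + t • v) = u z := by
    filter_upwards [hline] with z hz t
    have hd : ∀ s : ℝ, HasDerivAt (fun s : ℝ => u (z + s • v)) (fderiv ℝ u (z + s • v) v) s :=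
      fun s => (hu _).hasFDerivAt.comp_hasDerivAt s
        (((hasDerivAt_id s).smul_const v).const_add z |>.congr_deriv (by simp))
    simpa using eq_of_hasDerivAt_of_ae_eq_zero hd (hz.mono fun s hs => by simp [hs]) t 0
  have hclosed : IsClosed {z | ∀ t : ℝ, u (z + t • v) = u z} := by
    simp only [ofPred_forall]
    exact isClosed_iInter fun t => isClosed_eq
      (hu.continuous.comp (continuous_add_const _)) hu.continuous
  exact fun z => hclosed.closure_subset (Measure.dense_of_ae hG z)

lemma gradPow_nonneg (p : ℝ) (u : E3 → ℝ) : 0 ≤ gradPow p u :=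
  integral_nonneg fun _ => rpow_nonneg (norm_nonneg _) _

lemma lpPow_nonneg (s : ℝ) (u : E3 → ℝ) : 0 ≤ lpPow s u :=
  integral_nonneg fun _ => rpow_nonneg (abs_nonneg _) _

lemma one_div_mul_le_of_gagliardoNirenberg {p q b c M g L : ℝ} (hp : 3 / 2 < p)
    (hq : q = p + 2 * p ^ 2 / 3) (hb : 0 < b) (hM : 0 < M) (hc0 : 0 < c)
    (hGN : L ≤ q / (p * M ^ (q - p)) * g ^ (3 * (q - p) / p ^ 2) *
      (c ^ p) ^ ((q - 3 * (q - p) / p) / p))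
    (hc : c ≤ (b * M ^ (2 * p ^ 2 / 3) / 2) ^ (3 / (2 * p ^ 2 - 3 * p))) :
    1 / q * L ≤ b / (2 * p) * g ^ 2 := by
  have hp0 : 0 < p := by linarith
  have hq0 : 0 < q := by rw [hq]; positivity
  set r := 2 * p ^ 2 / 3 - p with hr
  have hr0 : 0 < r := by rw [hr]; nlinarith
  have hgrad : g ^ (3 * (q - p) / p ^ 2) = g ^ 2 := by
    rw [show 3 * (q - p) / p ^ 2 = (2 : ℕ) by rw [hq]; field_simp; norm_num, rpow_natCast]
  have hmass : (c ^ p) ^ ((q - 3 * (q - p) / p) / p) = c ^ r := by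
    rw [← rpow_mul hc0.le, hr, hq]
    congr 1
    field_simp
    ring
  have hcr : c ^ r ≤ b * M ^ (q - p) / 2 := by
    rw [show 3 / (2 * p ^ 2 - 3 * p) = r⁻¹ by rw [hr]; field_simp,
      le_rpow_inv_iff_of_pos hc0.le (by positivity) hr0] at hc
    rwa [show q - p = 2 * p ^ 2 / 3 by rw [hq]; ring]
  rw [hgrad, hmass] at hGN
  calc 1 / q * L ≤ 1 / q * (q / (p * M ^ (q - p)) * g ^ 2 * (b * M ^ (q - p) / 2)) := by
        gcongr
        exact hGN.trans (by gcongr)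
    _ = b / (2 * p) * g ^ 2 := by field_simp

lemma le_Ifun_of_mem_Sset {a b p q c M : ℝ} {u : E3 → ℝ} (hp : 3 / 2 < p)
    (hq : q = p + 2 * p ^ 2 / 3) (hb : 0 < b) (hM : 0 < M) (hc0 : 0 < c)
    (hc : c ≤ (b * M ^ (2 * p ^ 2 / 3) / 2) ^ (3 / (2 * p ^ 2 - 3 * p))) (hu : u ∈ Sset p c)
    (hGN : lpPow q u ≤ q / (p * M ^ (q - p)) * (gradPow p u) ^ (3 * (q - p) / p ^ 2) *
      (lpPow p u) ^ ((q - 3 * (q - p) / p) / p)) :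
    a / p * gradPow p u ≤ Ifun a b p q u := by
  rw [hu.2] at hGN
  have := one_div_mul_le_of_gagliardoNirenberg hp hq hb hM hc0 hGN hc
  unfold Ifun
  linarith

section Scaling

variable {p : ℝ} {u : E3 → ℝ} {k t : ℝ}

lemma lpPow_const_mul_comp_smul (s : ℝ) (hk : 0 ≤ k) (ht : 0 < t) :
    lpPow s (fun x => k * u (t • x)) = k ^ s / t ^ 3 * lpPow s u := by
  have hpt : ∀ x, |k * u (t • x)| ^ s = k ^ s * |u (t • x)| ^ s := fun x => by
    rw [abs_mul, abs_of_nonneg hk, mul_rpow hk (abs_nonneg _)]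
  simp only [lpPow, hpt, integral_const_mul,
    Measure.integral_comp_smul volume (fun y => |u y| ^ s), finrank_euclideanSpace_fin,
    smul_eq_mul, abs_inv, abs_pow, abs_of_pos ht]
  ring

lemma fderiv_const_mul_comp_smul (hu : Differentiable ℝ u) (x : E3) :
    fderiv ℝ (fun y => k * u (t • y)) x = (k * t) • fderiv ℝ u (t • x) := by
  have hcomp : HasFDerivAt (fun y => u (t • y)) (t • fderiv ℝ u (t • x)) x := by
    simpa [Function.comp_def] using
      (hu (t • x)).hasFDerivAt.comp x ((hasFDerivAt_id x).const_smul t)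
  rw [(hcomp.const_mul k).fderiv, smul_smul]

lemma gradPow_const_mul_comp_smul (hu : Differentiable ℝ u) (hk : 0 ≤ k) (ht : 0 < t) :
    gradPow p (fun x => k * u (t • x)) = (k * t) ^ p / t ^ 3 * gradPow p u := by
  have hpt : ∀ x, ‖fderiv ℝ (fun y => k * u (t • y)) x‖ ^ p
      = (k * t) ^ p * ‖fderiv ℝ u (t • x)‖ ^ p := fun x => by
    rw [fderiv_const_mul_comp_smul hu, norm_smul, Real.norm_of_nonneg (by positivity),
      mul_rpow (by positivity) (norm_nonneg _)]
  simp only [gradPow, hpt, integral_const_mul,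
    Measure.integral_comp_smul volume (fun y => ‖fderiv ℝ u y‖ ^ p), finrank_euclideanSpace_fin,
    smul_eq_mul, abs_inv, abs_pow, abs_of_pos ht]
  ring

lemma Wmem.const_mul_comp_smul (hu : Wmem p u) (k : ℝ) (ht : t ≠ 0) :
    Wmem p (fun x => k * u (t • x)) := by
  obtain ⟨hd, hLp, hgrad⟩ := hu
  refine ⟨(hd.comp (differentiable_id.const_smul t)).const_mul k, ?_, ?_⟩
  · have hpt : ∀ x, |k * u (t • x)| ^ p = |k| ^ p * |u (t • x)| ^ p := fun x => by
      rw [abs_mul, mul_rpow (abs_nonneg _) (abs_nonneg _)]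
    simp only [hpt]
    exact ((integrable_comp_smul_iff volume (fun y => |u y| ^ p) ht).2 hLp).const_mul _
  · have hpt : ∀ x, ‖fderiv ℝ (fun y => k * u (t • y)) x‖ ^ p
        = |k * t| ^ p * ‖fderiv ℝ u (t • x)‖ ^ p := fun x => by
      rw [fderiv_const_mul_comp_smul hd, norm_smul, Real.norm_eq_abs,
        mul_rpow (abs_nonneg _) (norm_nonneg _)]
    simp only [hpt]
    exact ((integrable_comp_smul_iff volume (fun y => ‖fderiv ℝ u y‖ ^ p) ht).2 hgrad).const_mul _

end Scaling

def dilate (p t : ℝ) (u : E3 → ℝ) : E3 → ℝ := fun x => t ^ (3 / p) * u (t • x)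

section Dilation

variable {p c t : ℝ} {u : E3 → ℝ}

lemma dilate_mem_Sset (hp : 0 < p) (ht : 0 < t) (hu : u ∈ Sset p c) : dilate p t u ∈ Sset p c := by
  refine ⟨hu.1.const_mul_comp_smul _ ht.ne', ?_⟩
  unfold dilate
  rw [lpPow_const_mul_comp_smul p (by positivity) ht, ← rpow_mul ht.le,
    div_mul_cancel₀ _ hp.ne', ← rpow_natCast, Nat.cast_ofNat, div_self (by positivity),
    one_mul, hu.2]

lemma gradPow_dilate (hp : 0 < p) (ht : 0 < t) (hu : Differentiable ℝ u) :
    gradPow p (dilate p t u) = t ^ p * gradPow p u := by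
  unfold dilate
  rw [gradPow_const_mul_comp_smul hu (by positivity) ht, mul_rpow (by positivity) ht.le,
    ← rpow_mul ht.le, div_mul_cancel₀ _ hp.ne', ← rpow_natCast, Nat.cast_ofNat,
    mul_div_cancel_left₀ _ (by positivity)]

end Dilation

lemma exists_mem_Sset {p c : ℝ} {Q : E3 → ℝ} (hp : 0 < p) (hc : 0 ≤ c) (hQ : Wmem p Q)
    (hQpos : 0 < lpPow p Q) : ∃ u, u ∈ Sset p c := by
  set k := c / lpPow p Q ^ (1 / p)
  refine ⟨fun x => k * Q ((1 : ℝ) • x), hQ.const_mul_comp_smul k one_ne_zero, ?_⟩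
  rw [lpPow_const_mul_comp_smul p (by positivity) one_pos, div_rpow hc (by positivity),
    ← rpow_mul hQpos.le, one_div_mul_cancel hp.ne', rpow_one]
  field_simp

lemma exists_seq_mem_Sset_tendsto_gradPow_zero {p c : ℝ} {Q : E3 → ℝ} (hp : 0 < p) (hc : 0 ≤ c)
    (hQ : Wmem p Q) (hQpos : 0 < lpPow p Q) :
    ∃ u : ℕ → E3 → ℝ, (∀ n, u n ∈ Sset p c) ∧
      Tendsto (fun n => gradPow p (u n)) atTop (nhds 0) := by
  obtain ⟨u, hu⟩ := exists_mem_Sset hp hc hQ hQpos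
  have ht : ∀ n : ℕ, 0 < 1 / ((n : ℝ) + 1) := fun n => by positivity
  refine ⟨fun n => dilate p (1 / ((n : ℝ) + 1)) u, fun n => dilate_mem_Sset hp (ht n) hu, ?_⟩
  simp only [gradPow_dilate hp (ht _) hu.1.1]
  simpa [zero_rpow hp.ne'] using
    (tendsto_one_div_add_atTop_nhds_zero_nat.rpow_const (Or.inr hp.le)).mul_const (gradPow p u)

lemma ifun_le_zero {a b p q c : ℝ} (hq : 0 ≤ q) (hbdd : BddBelow (Ifun a b p q '' Sset p c))
    {u : ℕ → E3 → ℝ} (hu : ∀ n, u n ∈ Sset p c)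
    (hlim : Tendsto (fun n => gradPow p (u n)) atTop (nhds 0)) : ifun a b p q c ≤ 0 := by
  have hbound : Tendsto (fun n => a / p * gradPow p (u n) + b / (2 * p) * gradPow p (u n) ^ 2)
      atTop (nhds 0) := by
    simpa using (hlim.const_mul (a / p)).add ((hlim.pow 2).const_mul (b / (2 * p)))
  refine ge_of_tendsto' hbound fun n => ?_
  calc ifun a b p q c ≤ Ifun a b p q (u n) := csInf_le hbdd (mem_image_of_mem _ (hu n))
    _ ≤ _ := sub_le_self _ (by have := lpPow_nonneg q (u n); positivity)

lemma gradPow_pos_of_mem_Sset {p c : ℝ} {u : E3 → ℝ} (hp : 0 < p) (hc : 0 < c)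
    (hu : u ∈ Sset p c) : 0 < gradPow p u := by
  obtain ⟨⟨hd, -, hgrad⟩, hLp⟩ := hu
  refine (gradPow_nonneg p u).lt_of_ne fun hzero => ?_
  have hflat : ∀ᵐ x : E3, fderiv ℝ u x = 0 := by
    filter_upwards [(integral_eq_zero_iff_of_nonneg (fun _ => by positivity) hgrad).1 hzero.symm]
      with x hx
    simpa [hp.ne'] using hx
  have hconst : (fun x => |u x| ^ p) = fun _ => |u 0| ^ p :=
    funext fun x => by rw [hd.apply_eq_of_ae_fderiv_eq_zero hflat x 0]
  -- `volume univ = ∞`, so the integral of a constant is `0` (a junk value unless it is `0`)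
  have : lpPow p u = 0 := by
    simp [lpPow, hconst, measureReal_def, measure_univ_of_isAddLeftInvariant]
  exact (rpow_pos_of_pos hc p).ne' (hLp ▸ this)

theorem stmt9_general (a b p q c : ℝ) (Q : E3 → ℝ) (ha : 0 < a) (hb : 0 < b)
    (hp1 : 3/2 < p) (hq : q = p + 2*p^2/3)
    (hQ : Wmem p Q) (hQpos : 0 < lpPow p Q)
    (hGN : ∀ u : E3 → ℝ, Wmem p u →
      lpPow q u ≤ q / (p * ((lpPow p Q) ^ (1/p)) ^ (q-p)) *
        (gradPow p u) ^ (3*(q-p)/p^2) * (lpPow p u) ^ ((q - 3*(q-p)/p)/p))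
    (hc0 : 0 < c)
    (hc : c ≤ (b * ((lpPow p Q) ^ (1/p)) ^ (2*p^2/3) / 2) ^ (3/(2*p^2 - 3*p))) :
    (∀ u ∈ Sset p c, 0 ≤ Ifun a b p q u) ∧ ifun a b p q c = 0 ∧
    ¬ ∃ u ∈ Sset p c, Ifun a b p q u = 0 := by
  have hp0 : 0 < p := by linarith
  have hlower : ∀ u ∈ Sset p c, a / p * gradPow p u ≤ Ifun a b p q u := fun u hu =>
    le_Ifun_of_mem_Sset hp1 hq hb (rpow_pos_of_pos hQpos _) hc0 hc hu (hGN u hu.1)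
  have hnonneg : ∀ u ∈ Sset p c, 0 ≤ Ifun a b p q u := fun u hu =>
    (mul_nonneg (div_pos ha hp0).le (gradPow_nonneg p u)).trans (hlower u hu)
  have hzero_lb : 0 ∈ lowerBounds (Ifun a b p q '' Sset p c) := by
    rintro _ ⟨u, hu, rfl⟩
    exact hnonneg u hu
  obtain ⟨u, hu, hlim⟩ := exists_seq_mem_Sset_tendsto_gradPow_zero hp0 hc0.le hQ hQpos
  refine ⟨hnonneg, le_antisymm ?_ (le_csInf ⟨_, mem_image_of_mem _ (hu 0)⟩ hzero_lb), ?_⟩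
  · exact ifun_le_zero (by rw [hq]; positivity) ⟨0, hzero_lb⟩ hu hlim
  · rintro ⟨v, hv, hIv⟩
    have := mul_pos (div_pos ha hp0) (gradPow_pos_of_mem_Sset hp0 hc0 hv)
    linarith [hlower v hv]

theorem stmt9 (a b p q c : ℝ) (Q : E3 → ℝ) (ha : 0 < a) (hb : 0 < b)
    (hp1 : 3/2 < p) (hp2 : p < 3) (hq : q = p + 2*p^2/3)
    (hQ : Wmem p Q) (hQpos : 0 < lpPow p Q)
    (hGN : ∀ u : E3 → ℝ, Wmem p u →
      lpPow q u ≤ q / (p * ((lpPow p Q) ^ (1/p)) ^ (q-p)) *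
        (gradPow p u) ^ (3*(q-p)/p^2) * (lpPow p u) ^ ((q - 3*(q-p)/p)/p))
    (hc0 : 0 < c)
    (hc : c ≤ (b * ((lpPow p Q) ^ (1/p)) ^ (2*p^2/3) / 2) ^ (3/(2*p^2 - 3*p))) :
    (∀ u ∈ Sset p c, 0 ≤ Ifun a b p q u) ∧ ifun a b p q c = 0 ∧
    ¬ ∃ u ∈ Sset p c, Ifun a b p q u = 0 :=
  stmt9_general a b p q c Q ha hb hp1 hq hQ hQpos hGN hc0 hc
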